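/- Let M ⊂ ℝ³ be the paraboloid z = x² + y² and f the restriction of z² to M. Then the Laplace–Beltrami operator of M applied to f satisfies, in polar coordinates φ(ρ,θ) = (ρcosθ, ρsinθ, ρ²), Δf = 4ρ²(3+8ρ²)/(1+4ρ²)² + 4ρ²/(1+4ρ²), and d(Δf)/dρ = 8ρ(3+4ρ²)/(1+4ρ²)³ + 8ρ/(1+4ρ²)² > 0 for ρ > 0; hence ∇f(Δf) > 0 away from the origin and Δf is non-decreasing along the orbits of ∇f. -/

import Mathlib

/-! All claims are one-variable calculus in `ρ`: the two derivatives follow from the quotient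
and chain rules after clearing denominators (using `√(1+4ρ²)² = 1+4ρ²`), and for `ρ > 0`
every summand is a quotient of positive terms. -/

open Real

/-- The value of the Laplace–Beltrami operator of the paraboloid applied to f = z²|_M,
in the polar coordinates ψ(ρ,θ) = (ρcosθ, ρsinθ, ρ²):
Δf = 4ρ²(3+8ρ²)/(1+4ρ²)² + 4ρ²/(1+4ρ²). -/
noncomputable def lapf (ρ : ℝ) : ℝ :=
  4 * ρ ^ 2 * (3 + 8 * ρ ^ 2) / (1 + 4 * ρ ^ 2) ^ 2 + 4 * ρ ^ 2 / (1 + 4 * ρ ^ 2)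

theorem hasDerivAt_one_add_four_mul_sq (ρ : ℝ) :
    HasDerivAt (fun r : ℝ => 1 + 4 * r ^ 2) (8 * ρ) ρ :=
  (((hasDerivAt_pow 2 ρ).const_mul 4).const_add 1).congr_deriv (by ring)

theorem hasDerivAt_radial_flux (ρ : ℝ) :
    HasDerivAt (fun r : ℝ => r * (4 * r ^ 3) / √(1 + 4 * r ^ 2))
      (ρ * √(1 + 4 * ρ ^ 2) * lapf ρ) ρ := by
  have hE : 0 < 1 + 4 * ρ ^ 2 := by positivity
  have hsqrt_pos : 0 < √(1 + 4 * ρ ^ 2) := sqrt_pos.mpr hE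
  have hsqrt_sq : √(1 + 4 * ρ ^ 2) ^ 2 = 1 + 4 * ρ ^ 2 := sq_sqrt hE.le
  have hnum := (hasDerivAt_id' ρ).fun_mul ((hasDerivAt_pow 3 ρ).const_mul 4)
  refine (hnum.fun_div ((hasDerivAt_one_add_four_mul_sq ρ).sqrt hE.ne')
    hsqrt_pos.ne').congr_deriv ?_
  unfold lapf
  set u := √(1 + 4 * ρ ^ 2)
  rw [← hsqrt_sq]
  field_simp
  linear_combination 6 * ρ ^ 3 * hsqrt_sq

theorem hasDerivAt_lapf (ρ : ℝ) :
    HasDerivAt lapf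
      (8 * ρ * (3 + 4 * ρ ^ 2) / (1 + 4 * ρ ^ 2) ^ 3 + 8 * ρ / (1 + 4 * ρ ^ 2) ^ 2) ρ := by
  have hE : 0 < 1 + 4 * ρ ^ 2 := by positivity
  have hE_deriv := hasDerivAt_one_add_four_mul_sq ρ
  have hsq := (hasDerivAt_pow 2 ρ).const_mul 4
  have hnum := hsq.fun_mul (((hasDerivAt_pow 2 ρ).const_mul 8).const_add 3)
  refine ((hnum.fun_div (hE_deriv.fun_pow 2) (pow_pos hE 2).ne').fun_add
    (hsq.fun_div hE_deriv hE.ne')).congr_deriv ?_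
  field_simp
  ring

/-- On the paraboloid z = x² + y² with f = z²|_M, in polar coordinates (with first
fundamental form E = 1+4ρ², F = 0, G = ρ², so √(EG) = ρ√(1+4ρ²) and ∂ρ(f∘ψ) = 4ρ³),
the Laplace–Beltrami formula Δf = (1/√(EG)) ∂ρ(√(EG)·(∂ρf)/E) gives
Δf = 4ρ²(3+8ρ²)/(1+4ρ²)² + 4ρ²/(1+4ρ²); moreover
d(Δf)/dρ = 8ρ(3+4ρ²)/(1+4ρ²)³ + 8ρ/(1+4ρ²)² > 0 for ρ > 0, hence
∇f(Δf) = (4ρ³/(1+4ρ²))·d(Δf)/dρ > 0 away from the origin, so Δf is non-decreasing along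
the orbits of ∇f. -/
theorem stmt_16 :
    -- the Laplace–Beltrami computation: ∂ρ(√(EG)·(∂ρf)/E) = √(EG)·Δf,
    -- where √(EG)·(∂ρf)/E = ρ·4ρ³/√(1+4ρ²)
    (∀ ρ : ℝ, 0 < ρ →
      HasDerivAt (fun r : ℝ => r * (4 * r ^ 3) / Real.sqrt (1 + 4 * r ^ 2))
        (ρ * Real.sqrt (1 + 4 * ρ ^ 2) * lapf ρ) ρ) ∧
    -- the derivative of Δf in ρ, and its positivity
    (∀ ρ : ℝ, 0 < ρ →
      HasDerivAt lapf
        (8 * ρ * (3 + 4 * ρ ^ 2) / (1 + 4 * ρ ^ 2) ^ 3 + 8 * ρ / (1 + 4 * ρ ^ 2) ^ 2) ρ ∧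
      0 < 8 * ρ * (3 + 4 * ρ ^ 2) / (1 + 4 * ρ ^ 2) ^ 3 + 8 * ρ / (1 + 4 * ρ ^ 2) ^ 2) ∧
    -- hence ∇f(Δf) = (4ρ³/(1+4ρ²))·d(Δf)/dρ > 0 for ρ > 0
    (∀ ρ : ℝ, 0 < ρ →
      0 < (4 * ρ ^ 3 / (1 + 4 * ρ ^ 2)) *
        (8 * ρ * (3 + 4 * ρ ^ 2) / (1 + 4 * ρ ^ 2) ^ 3 + 8 * ρ / (1 + 4 * ρ ^ 2) ^ 2)) :=
  ⟨fun ρ _ => hasDerivAt_radial_flux ρ,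
    fun ρ hρ => ⟨hasDerivAt_lapf ρ, by positivity⟩,
    fun ρ hρ => by positivity⟩
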